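/- Let G ∈ C²(ℝ) be nonnegative, let u ∈ C²(ℝ^N) be a bounded solution of Δu = G'(u) on ℝ^N with G(u(x)) > 0 for all x, and set ω = √(G∘u). Then ω satisfies the pointwise identity -Δω + G''(u)ω = 2(G(u) - |∇u|²/2)(√G)''(u) in ℝ^N. -/

import Mathlib

/-!
Write `f = √G`, so that `ω = f ∘ u`. The chain rule gives
`Δω = f'(u) Δu + f''(u) |∇u|²`, and differentiating `f² = G` twice near a point where `G > 0`
gives `G'' f - G' f' = 2 G f''`. Substituting `Δu = G'(u)` turns the first identity into the
claimed one.
-/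

open MeasureTheory

/-- The Laplacian of a scalar function on `ℝ^N`, as the sum of the second
partial derivatives in the coordinate directions. -/
noncomputable def laplacian {N : ℕ} (f : EuclideanSpace ℝ (Fin N) → ℝ)
    (x : EuclideanSpace ℝ (Fin N)) : ℝ :=
  ∑ i : Fin N,
    fderiv ℝ (fun y => fderiv ℝ f y (EuclideanSpace.single i 1)) x
      (EuclideanSpace.single i 1)

open Filter Topology

theorem ContDiffAt.differentiableAt_deriv {f : ℝ → ℝ} {s : ℝ} (hf : ContDiffAt ℝ 2 f s) :
    DifferentiableAt ℝ (deriv f) s :=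
  (hf.derivWithin (m := 1) (by norm_num)).differentiableAt one_ne_zero

theorem deriv_deriv_sq {f : ℝ → ℝ} {s : ℝ} (hf : ContDiffAt ℝ 2 f s) :
    deriv (deriv fun t => f t ^ 2) s = 2 * (deriv f s ^ 2 + f s * deriv (deriv f) s) := by
  have hderiv : deriv (fun t => f t ^ 2) =ᶠ[𝓝 s] fun t => 2 * f t * deriv f t := by
    filter_upwards [hf.eventually (by simp)] with t ht
    simp [deriv_fun_pow (ht.differentiableAt two_ne_zero)]
  rw [hderiv.deriv_eq,
    deriv_fun_mul ((hf.differentiableAt two_ne_zero).const_mul 2) hf.differentiableAt_deriv,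
    deriv_const_mul _ (hf.differentiableAt two_ne_zero)]
  ring

theorem deriv_deriv_sqrt_identity {G : ℝ → ℝ} {s : ℝ} (hG : ContDiffAt ℝ 2 G s) (hs : 0 < G s) :
    deriv (deriv G) s * √(G s) - deriv G s * deriv (fun t => √(G t)) s =
      2 * G s * deriv (deriv fun t => √(G t)) s := by
  have hf : ContDiffAt ℝ 2 (fun t => √(G t)) s := hG.sqrt hs.ne'
  have hGf : G =ᶠ[𝓝 s] fun t => √(G t) ^ 2 := by
    filter_upwards [hG.continuousAt.eventually (lt_mem_nhds hs)] with t ht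
    exact (Real.sq_sqrt ht.le).symm
  rw [hGf.deriv.deriv_eq, hGf.deriv_eq, deriv_deriv_sq hf,
    deriv_fun_pow (hf.differentiableAt two_ne_zero)]
  linear_combination (2 * deriv (deriv fun t => √(G t)) s) * Real.sq_sqrt hs.le

theorem fderiv_fderiv_comp_apply {E : Type*} [NormedAddCommGroup E] [NormedSpace ℝ E]
    {f : ℝ → ℝ} {u : E → ℝ} {x : E} (e : E) (hu : ContDiff ℝ 2 u)
    (hf : ∀ y, DifferentiableAt ℝ f (u y)) (hf' : DifferentiableAt ℝ (deriv f) (u x)) :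
    fderiv ℝ (fun y => fderiv ℝ (f ∘ u) y e) x e =
      deriv f (u x) * fderiv ℝ (fun y => fderiv ℝ u y e) x e +
        deriv (deriv f) (u x) * fderiv ℝ u x e ^ 2 := by
  have hud : Differentiable ℝ u := hu.differentiable two_ne_zero
  have hfirst : (fun y => fderiv ℝ (f ∘ u) y e) = fun y => deriv f (u y) * fderiv ℝ u y e := by
    funext y
    simp [((hf y).hasDerivAt.comp_hasFDerivAt y (hud y).hasFDerivAt).fderiv]
  have hcoeff : HasFDerivAt (fun y => deriv f (u y)) (deriv (deriv f) (u x) • fderiv ℝ u x) x :=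
    hf'.hasDerivAt.comp_hasFDerivAt x (hud x).hasFDerivAt
  have hpartial : DifferentiableAt ℝ (fun y => fderiv ℝ u y e) x :=
    ((hu.fderiv_right (m := 1) (by norm_num)).clm_apply contDiff_const).differentiable
      one_ne_zero x
  rw [hfirst, (hcoeff.fun_mul hpartial.hasFDerivAt).fderiv]
  simp only [add_apply, smul_apply, smul_eq_mul]
  ring

theorem norm_gradient_sq_eq_sum {N : ℕ} (u : EuclideanSpace ℝ (Fin N) → ℝ)
    (x : EuclideanSpace ℝ (Fin N)) :
    ‖gradient u x‖ ^ 2 = ∑ i, fderiv ℝ u x (EuclideanSpace.single i 1) ^ 2 := by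
  simp [EuclideanSpace.norm_sq_eq, ← inner_gradient_left, EuclideanSpace.inner_single_right]

theorem laplacian_comp {N : ℕ} {f : ℝ → ℝ} {u : EuclideanSpace ℝ (Fin N) → ℝ}
    {x : EuclideanSpace ℝ (Fin N)} (hu : ContDiff ℝ 2 u)
    (hf : ∀ y, DifferentiableAt ℝ f (u y)) (hf' : DifferentiableAt ℝ (deriv f) (u x)) :
    laplacian (f ∘ u) x =
      deriv f (u x) * laplacian u x + deriv (deriv f) (u x) * ‖gradient u x‖ ^ 2 := by
  simp only [laplacian, fderiv_fderiv_comp_apply _ hu hf hf', Finset.sum_add_distrib,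
    ← Finset.mul_sum, norm_gradient_sq_eq_sum]

theorem omega_identity_general (N : ℕ) (G : ℝ → ℝ) (hG : ContDiff ℝ 2 G)
    (u : EuclideanSpace ℝ (Fin N) → ℝ) (hu : ContDiff ℝ 2 u)
    (heq : ∀ x, laplacian u x = deriv G (u x))
    (hGu : ∀ x, 0 < G (u x))
    (ω : EuclideanSpace ℝ (Fin N) → ℝ)
    (hω : ∀ x, ω x = Real.sqrt (G (u x))) :
    ∀ x, - laplacian ω x + deriv (deriv G) (u x) * ω x =
      2 * (G (u x) - ‖gradient u x‖ ^ 2 / 2) *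
        deriv (deriv (fun s => Real.sqrt (G s))) (u x) := by
  intro x
  have hsqrt : ∀ y, ContDiffAt ℝ 2 (fun s => √(G s)) (u y) :=
    fun y => hG.contDiffAt.sqrt (hGu y).ne'
  have hωu : ω = (fun s => √(G s)) ∘ u := funext hω
  rw [hω x, hωu, laplacian_comp hu (fun y => (hsqrt y).differentiableAt two_ne_zero)
    (hsqrt x).differentiableAt_deriv, heq x]
  linear_combination deriv_deriv_sqrt_identity hG.contDiffAt (hGu x)

theorem omega_identity (N : ℕ) (G : ℝ → ℝ) (hG : ContDiff ℝ 2 G)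
    (hGnonneg : ∀ s, 0 ≤ G s)
    (u : EuclideanSpace ℝ (Fin N) → ℝ) (hu : ContDiff ℝ 2 u)
    (hbdd : ∃ M : ℝ, ∀ x, |u x| ≤ M)
    (heq : ∀ x, laplacian u x = deriv G (u x))
    (hGu : ∀ x, 0 < G (u x))
    (ω : EuclideanSpace ℝ (Fin N) → ℝ)
    (hω : ∀ x, ω x = Real.sqrt (G (u x))) :
    ∀ x, - laplacian ω x + deriv (deriv G) (u x) * ω x =
      2 * (G (u x) - ‖gradient u x‖ ^ 2 / 2) *
        deriv (deriv (fun s => Real.sqrt (G s))) (u x) :=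
  omega_identity_general N G hG u hu heq hGu ω hω
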